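/- Let N ≥ 1 and 1 ≤ p ≤ N be integers. Then (1/p!) · Σ over all compositions (n₁,…,n_p) of N of ∏_{l=1}^{p} 1/n_l equals c(N,p)/N!, where c(N,p) is the number of permutations of an N-element set having exactly p orbits (cycles, with fixed points counted as cycles of length 1). -/

import Mathlib

/-!
Count the pairs `(σ, t)` where `σ` is a permutation of `Fin N` and `t : Fin N → Fin p` labels
the orbits of `σ` bijectively. A permutation with `p` orbits has `p!` such labellings, so there
are `p! · c(N,p)` pairs. The orbit sizes `(n₁,…,n_p)` of a pair form a composition of `N`, and a
pair with orbit sizes `n` together with a base point `bᵢ` in each orbit is the same thing as a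
bijection `e : (Σ i, Fin nᵢ) ≃ Fin N`: from `e`, transport the rotation of each block and the
block index; conversely `e ⟨i, k⟩ = σ ^ k (bᵢ)`. As there are `N!` bijections and `∏ nᵢ` choices
of base points, exactly `N! / ∏ nᵢ` pairs have orbit sizes `n`; summing over compositions gives
the identity.
-/

open Finset

/-- The number of orbits (cycles, fixed points included) of a permutation `σ`. -/
noncomputable def permOrbitCount {α : Type*} (σ : Equiv.Perm α) : ℕ :=
  Nat.card (MulAction.orbitRel.Quotient (Subgroup.zpowers σ) α)

open Equiv Function

theorem Nat.card_equiv_eq_ite {α β : Type*} [Finite α] [Finite β] :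
    Nat.card (α ≃ β) = if Nat.card α = Nat.card β then (Nat.card β).factorial else 0 := by
  split_ifs with h
  · obtain ⟨e⟩ := Finite.card_eq.mp h
    rw [Nat.card_congr (e.equivCongr (Equiv.refl β)), Nat.card_perm]
  · have : IsEmpty (α ≃ β) := ⟨fun e => h (Nat.card_congr e)⟩
    exact Nat.card_of_isEmpty

theorem sum_card_fiber_eq_card {α ι : Type*} [Finite α] [Fintype ι] (t : α → ι) :
    ∑ i, Nat.card {x // t x = i} = Nat.card α := by
  rw [← Nat.card_sigma, Nat.card_congr (Equiv.sigmaFiberEquiv t)]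

noncomputable def Setoid.surjectionsWithKerEquiv {α ι : Type*} (r : Setoid α) :
    {t : α → ι // (∀ x y, t x = t y ↔ r x y) ∧ Surjective t} ≃ (Quotient r ≃ ι) where
  toFun t := (Quotient.congrRight fun x y => (t.2.1 x y).symm.trans Setoid.ker_def.symm).trans
    (Setoid.quotientKerEquivOfSurjective t.1 t.2.2)
  invFun e := ⟨e ∘ Quotient.mk r, fun _ _ => e.injective.eq_iff.trans Quotient.eq,
    e.surjective.comp Quotient.mk_surjective⟩
  left_inv _ := rfl
  right_inv _ := Equiv.ext fun q => Quotient.inductionOn q fun _ => rfl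

theorem coe_finRotate_pow {m : ℕ} (k : Fin m) (j : ℕ) :
    ((finRotate m ^ j) k : ℕ) = (k + j) % m := by
  induction j with
  | zero => simp [Nat.mod_eq_of_lt k.isLt]
  | succ j ih =>
    obtain _ | m := m
    · exact k.elim0
    rw [pow_succ', Perm.mul_apply, finRotate_apply, Fin.val_add, ih, Fin.val_one',
      Nat.add_mod_mod, Nat.mod_add_mod, Nat.add_assoc]

theorem finRotate_pow_apply_zero {m : ℕ} (hm : 0 < m) (k : Fin m) :
    (finRotate m ^ (k : ℕ)) ⟨0, hm⟩ = k :=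
  Fin.ext <| by rw [coe_finRotate_pow, Nat.zero_add, Nat.mod_eq_of_lt k.isLt]

namespace Equiv.Perm

variable {α ι : Type*}

def IsOrbitLabelling (σ : Perm α) (t : α → ι) : Prop :=
  (∀ x y, t x = t y ↔ σ.SameCycle x y) ∧ Surjective t

theorem orbitRel_zpowers_eq (σ : Perm α) :
    MulAction.orbitRel (Subgroup.zpowers σ) α = SameCycle.setoid σ := by
  ext x y
  rw [MulAction.orbitRel_apply, MulAction.mem_orbit_iff, Subgroup.exists_zpowers]
  exact sameCycle_comm

theorem _root_.permOrbitCount_eq_card_quotient (σ : Perm α) :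
    permOrbitCount σ = Nat.card (Quotient (SameCycle.setoid σ)) := by
  rw [permOrbitCount, MulAction.orbitRel.Quotient, orbitRel_zpowers_eq]

theorem card_isOrbitLabelling [Finite α] [Finite ι] (σ : Perm α) :
    Nat.card {t : α → ι // σ.IsOrbitLabelling t} =
      if permOrbitCount σ = Nat.card ι then (Nat.card ι).factorial else 0 := by
  rw [Nat.card_congr (α := {t : α → ι // σ.IsOrbitLabelling t})
      (Setoid.surjectionsWithKerEquiv (SameCycle.setoid σ)), Nat.card_equiv_eq_ite,
    permOrbitCount_eq_card_quotient]

theorem card_isOrbitLabelling_pairs [Finite α] [Finite ι] :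
    Nat.card {y : Perm α × (α → ι) // y.1.IsOrbitLabelling y.2} =
      (Nat.card ι).factorial * Nat.card {σ : Perm α // permOrbitCount σ = Nat.card ι} := by
  have := Fintype.ofFinite (Perm α)
  rw [Nat.card_congr (α := {y : Perm α × (α → ι) // y.1.IsOrbitLabelling y.2})
    (Equiv.subtypeProdEquivSigmaSubtype IsOrbitLabelling), Nat.card_sigma]
  simp only [card_isOrbitLabelling]
  rw [Finset.sum_ite, Finset.sum_const_zero, add_zero, Finset.sum_const, smul_eq_mul, mul_comm,
    Nat.card_eq_fintype_card (α := {σ : Perm α // _}), Fintype.card_subtype]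

namespace IsOrbitLabelling

variable {σ : Perm α} {t : α → ι}

theorem permCongr {β : Type*} (h : σ.IsOrbitLabelling t) (e : α ≃ β) :
    (e.permCongr σ).IsOrbitLabelling (t ∘ e.symm) := by
  have hsame (x y : β) : (e.permCongr σ).SameCycle x y ↔ σ.SameCycle (e.symm x) (e.symm y) :=
    exists_congr fun z => by
      have hpow : e.permCongr σ ^ z = e.permCongr (σ ^ z) := (map_zpow e.permCongrHom σ z).symm
      rw [hpow, permCongr_apply, ← eq_symm_apply]
  exact ⟨fun x y => (h.1 _ _).trans (hsame x y).symm, h.2.comp e.symm.surjective⟩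

theorem apply_pow (h : σ.IsOrbitLabelling t) (j : ℕ) (x : α) : t ((σ ^ j) x) = t x :=
  (h.1 _ _).mpr ⟨-(j : ℤ), by simp [zpow_neg]⟩

theorem card_fiber_eq_minimalPeriod [Finite α] (h : σ.IsOrbitLabelling t) (y : α) :
    Nat.card {x // t x = t y} = minimalPeriod σ y := by
  have e : {x // t x = t y} ≃ MulAction.orbit (Subgroup.zpowers σ) y :=
    Equiv.subtypeEquivRight fun x => by
      rw [MulAction.mem_orbit_iff, Subgroup.exists_zpowers, eq_comm, h.1]
      rfl
  rw [Nat.card_congr (e.trans (MulAction.orbitZPowersEquiv σ y)), Nat.card_zmod]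
  rfl

end IsOrbitLabelling

end Equiv.Perm

namespace StirlingFirst

section BlockRotation

variable {ι : Type*} (n : ι → ℕ)

def blockRotation : Perm (Σ i, Fin (n i)) :=
  Perm.sigmaCongrRight fun i => finRotate (n i)

theorem blockRotation_zpow_apply (z : ℤ) (s : Σ i, Fin (n i)) :
    (blockRotation n ^ z) s = ⟨s.1, (finRotate (n s.1) ^ z) s.2⟩ := by
  rw [blockRotation, ← Perm.sigmaCongrRightHom_apply, ← map_zpow]
  rfl

theorem blockRotation_pow_apply (j : ℕ) (s : Σ i, Fin (n i)) :
    (blockRotation n ^ j) s = ⟨s.1, (finRotate (n s.1) ^ j) s.2⟩ := by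
  rw [← zpow_natCast, blockRotation_zpow_apply, zpow_natCast]

variable {n}

theorem sameCycle_blockRotation_iff {s s' : Σ i, Fin (n i)} :
    (blockRotation n).SameCycle s s' ↔ s.1 = s'.1 := by
  constructor
  · rintro ⟨z, rfl⟩
    rw [blockRotation_zpow_apply]
  · obtain ⟨i, k⟩ := s
    obtain ⟨i', k'⟩ := s'
    rintro rfl
    refine ⟨((k' + n i - k : ℕ) : ℤ), ?_⟩
    rw [blockRotation_zpow_apply, zpow_natCast]
    refine congrArg (Sigma.mk i) (Fin.ext ?_)
    rw [coe_finRotate_pow, ← Nat.add_sub_assoc (by omega), Nat.add_sub_cancel_left,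
      Nat.add_mod_right, Nat.mod_eq_of_lt k'.isLt]

theorem isOrbitLabelling_blockRotation (hn : ∀ i, 0 < n i) :
    (blockRotation n).IsOrbitLabelling Sigma.fst :=
  ⟨fun _ _ => sameCycle_blockRotation_iff.symm, fun i => ⟨⟨i, ⟨0, hn i⟩⟩, rfl⟩⟩

end BlockRotation

section Parametrization

variable {α ι : Type*} {σ : Perm α} {t : α → ι} {n : ι → ℕ} (b : ι → α)

def orbitParametrization (σ : Perm α) (s : Σ i, Fin (n i)) : α :=
  (σ ^ (s.2 : ℕ)) (b s.1)

variable (hσ : σ.IsOrbitLabelling t) (hn : ∀ i, Nat.card {x // t x = i} = n i)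
  (hb : ∀ i, t (b i) = i)
include hσ hb

theorem label_orbitParametrization (s : Σ i, Fin (n i)) :
    t (orbitParametrization b σ s) = s.1 := by
  rw [orbitParametrization, hσ.apply_pow, hb]

variable [Finite α]
include hn

theorem minimalPeriod_basePoint (i : ι) : minimalPeriod σ (b i) = n i := by
  rw [← hσ.card_fiber_eq_minimalPeriod, hb, hn]

theorem orbitParametrization_blockRotation (s : Σ i, Fin (n i)) :
    orbitParametrization b σ (blockRotation n s) = σ (orbitParametrization b σ s) := by
  obtain ⟨i, k⟩ := s
  have hrot : ((finRotate (n i) k : Fin (n i)) : ℕ) = (k + 1) % minimalPeriod σ (b i) := by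
    rw [minimalPeriod_basePoint b hσ hn hb, ← pow_one (finRotate _), coe_finRotate_pow]
  rw [orbitParametrization, orbitParametrization, ← pow_one (blockRotation n),
    blockRotation_pow_apply, pow_one, hrot, ← Perm.iterate_eq_pow, iterate_mod_minimalPeriod_eq,
    iterate_succ_apply', Perm.iterate_eq_pow]

theorem bijective_orbitParametrization [Fintype ι] :
    Bijective (orbitParametrization (n := n) b σ) := by
  refine Injective.bijective_of_nat_card_le ?_ (le_of_eq ?_)
  · rintro ⟨i, k⟩ ⟨i', k'⟩ heq
    obtain rfl : i = i' := by
      simpa only [label_orbitParametrization b hσ hb] using congrArg t heq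
    have hlt (k : Fin (n i)) : (k : ℕ) ∈ Set.Iio (minimalPeriod σ (b i)) := by
      rw [Set.mem_Iio, minimalPeriod_basePoint b hσ hn hb]
      exact k.isLt
    have hk := iterate_injOn_Iio_minimalPeriod (hlt k) (hlt k') (by
      simp only [Perm.iterate_eq_pow]
      exact heq)
    exact congrArg (Sigma.mk i) (Fin.ext hk)
  · rw [← sum_card_fiber_eq_card t, Nat.card_sigma]
    simp [hn]

end Parametrization

section Counting

variable (α : Type*) {ι : Type*}

def orbitLabellings (n : ι → ℕ) : Set (Perm α × (α → ι)) :=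
  {y | y.1.IsOrbitLabelling y.2 ∧ ∀ i, Nat.card {x // y.2 x = i} = n i}

def pointedOrbitLabellings (n : ι → ℕ) : Set (Perm α × (α → ι) × (ι → α)) :=
  {y | (y.1, y.2.1) ∈ orbitLabellings α n ∧ ∀ i, y.2.1 (y.2.2 i) = i}

variable {α} [Finite α] [Fintype ι] {n : ι → ℕ}

noncomputable def equivPointedOrbitLabellings (hpos : ∀ i, 0 < n i) :
    ((Σ i, Fin (n i)) ≃ α) ≃ pointedOrbitLabellings α n where
  toFun e := ⟨(e.permCongr (blockRotation n), Sigma.fst ∘ e.symm, fun i => e ⟨i, ⟨0, hpos i⟩⟩),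
    ⟨(isOrbitLabelling_blockRotation hpos).permCongr e, fun i => by
      change Nat.card {x // (e.symm x).1 = i} = n i
      rw [← Nat.card_fin (n i), ← Nat.card_congr (Equiv.sigmaSubtype (β := fun i => Fin (n i)) i)]
      exact Nat.card_congr (e.symm.subtypeEquiv fun _ => Iff.rfl)⟩,
    fun i => by simp⟩
  invFun y := Equiv.ofBijective _ (bijective_orbitParametrization y.1.2.2 y.2.1.1 y.2.1.2 y.2.2)
  left_inv e := Equiv.ext fun ⟨i, k⟩ => by
    have hpow : e.permCongr (blockRotation n) ^ (k : ℕ) =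
        e.permCongr (blockRotation n ^ (k : ℕ)) :=
      (map_pow e.permCongrHom _ _).symm
    simp only [Equiv.ofBijective_apply, orbitParametrization, hpow, permCongr_apply,
      symm_apply_apply, blockRotation_pow_apply, finRotate_pow_apply_zero]
  right_inv y := by
    obtain ⟨⟨σ, t, b⟩, ⟨hσ, hn⟩, hb⟩ := y
    set g := Equiv.ofBijective _ (bijective_orbitParametrization b hσ hn hb)
    have hg (s : Σ i, Fin (n i)) : g s = orbitParametrization b σ s := rfl
    refine Subtype.ext (Prod.ext ?_ (Prod.ext ?_ ?_))
    · refine Equiv.ext fun x => ?_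
      obtain ⟨s, rfl⟩ := g.surjective x
      rw [permCongr_apply, symm_apply_apply, hg, hg, orbitParametrization_blockRotation b hσ hn hb]
    · change Sigma.fst ∘ g.symm = t
      refine funext fun x => ?_
      obtain ⟨s, rfl⟩ := g.surjective x
      rw [comp_apply, symm_apply_apply, hg]
      exact (label_orbitParametrization b hσ hb s).symm
    · change (fun i => g ⟨i, ⟨0, hpos i⟩⟩) = b
      exact funext fun i => by simp [hg, orbitParametrization]

def pointedOrbitLabellingsEquivSigma :
    pointedOrbitLabellings α n ≃ Σ y : orbitLabellings α n, ∀ i, {x // y.1.2 x = i} where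
  toFun y := ⟨⟨(y.1.1, y.1.2.1), y.2.1⟩, fun i => ⟨y.1.2.2 i, y.2.2 i⟩⟩
  invFun y := ⟨(y.1.1.1, y.1.1.2, fun i => y.2 i), y.1.2, fun i => (y.2 i).2⟩
  left_inv _ := rfl
  right_inv _ := rfl

theorem card_orbitLabellings_mul_prod (hpos : ∀ i, 0 < n i) (hsum : ∑ i, n i = Nat.card α) :
    Nat.card (orbitLabellings α n) * ∏ i, n i = (Nat.card α).factorial := by
  have := Fintype.ofFinite (orbitLabellings α n)
  calc Nat.card (orbitLabellings α n) * ∏ i, n i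
      = Nat.card (pointedOrbitLabellings α n) := by
        rw [Nat.card_congr pointedOrbitLabellingsEquivSigma, Nat.card_sigma]
        simp only [Nat.card_pi, fun y : orbitLabellings α n => y.2.2, Finset.sum_const,
          Finset.card_univ, smul_eq_mul, Nat.card_eq_fintype_card]
    _ = (Nat.card α).factorial := by
        rw [← Nat.card_congr (equivPointedOrbitLabellings hpos), Nat.card_equiv_eq_ite,
          Nat.card_sigma]
        simp [hsum]

end Counting

section Compositions

variable {N p : ℕ}

def blockSizes (c : {c : Composition N // c.length = p}) (i : Fin p) : ℕ :=
  c.1.blocksFun (Fin.cast c.2.symm i)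

def compositionOfFn (n : Fin p → ℕ) (hpos : ∀ i, 0 < n i) (hsum : ∑ i, n i = N) :
    {c : Composition N // c.length = p} :=
  ⟨⟨List.ofFn n, fun h => by obtain ⟨i, rfl⟩ := List.mem_ofFn.mp h; exact hpos i,
    by rw [List.sum_ofFn, hsum]⟩, List.length_ofFn⟩

theorem blockSizes_compositionOfFn (n : Fin p → ℕ) (hpos : ∀ i, 0 < n i) (hsum : ∑ i, n i = N) :
    blockSizes (compositionOfFn n hpos hsum) = n :=
  funext fun i => by
    simp only [blockSizes, Composition.blocksFun, compositionOfFn, List.get_eq_getElem,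
      List.getElem_ofFn]
    rfl

theorem compositionOfFn_eq {n : Fin p → ℕ} {hpos : ∀ i, 0 < n i} {hsum : ∑ i, n i = N}
    {c : {c : Composition N // c.length = p}} (h : n = blockSizes c) :
    compositionOfFn n hpos hsum = c := by
  subst h
  obtain ⟨c, rfl⟩ := c
  exact Subtype.ext (Composition.ext c.ofFn_blocksFun)

theorem prod_blockSizes (c : {c : Composition N // c.length = p}) :
    ∏ i, blockSizes c i = ∏ i, c.1.blocksFun i :=
  Fin.prod_congr' c.1.blocksFun c.2.symm

theorem sum_blockSizes (c : {c : Composition N // c.length = p}) : ∑ i, blockSizes c i = N :=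
  (Fin.sum_congr' c.1.blocksFun c.2.symm).trans c.1.sum_blocksFun

variable {α : Type*} [Finite α]

noncomputable def isOrbitLabellingEquivSigma (hα : Nat.card α = N) :
    {y : Perm α × (α → Fin p) // y.1.IsOrbitLabelling y.2} ≃
      Σ c : {c : Composition N // c.length = p}, orbitLabellings α (blockSizes c) where
  toFun y := ⟨compositionOfFn (fun i => Nat.card {x // y.1.2 x = i})
      (fun i => Nat.card_pos_iff.2 ⟨(y.2.2 i).elim fun x hx => ⟨⟨x, hx⟩⟩, inferInstance⟩)
      (by rw [sum_card_fiber_eq_card, hα]),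
    ⟨y.1, y.2, fun i => by rw [blockSizes_compositionOfFn]⟩⟩
  invFun z := ⟨z.2.1, z.2.2.1⟩
  left_inv _ := rfl
  right_inv := by
    rintro ⟨c, y, hy⟩
    refine Sigma.subtype_ext ?_ rfl
    dsimp only
    exact compositionOfFn_eq (funext hy.2)

theorem sum_card_orbitLabellings (hα : Nat.card α = N) :
    ∑ c : {c : Composition N // c.length = p}, Nat.card (orbitLabellings α (blockSizes c)) =
      p.factorial * Nat.card {σ : Perm α // permOrbitCount σ = p} := by
  rw [← Nat.card_sigma, ← Nat.card_congr (isOrbitLabellingEquivSigma hα),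
    Perm.card_isOrbitLabelling_pairs, Nat.card_fin]

theorem prod_one_div_blocksFun (c : {c : Composition N // c.length = p}) :
    ∏ i, (1 : ℚ) / c.1.blocksFun i =
      Nat.card (orbitLabellings (Fin N) (blockSizes c)) / N.factorial := by
  have hcount : (Nat.card (orbitLabellings (Fin N) (blockSizes c)) : ℚ) *
      ∏ i, (c.1.blocksFun i : ℚ) = N.factorial := by
    have h := card_orbitLabellings_mul_prod (α := Fin N) (n := blockSizes c)
      (fun i => c.1.one_le_blocksFun _) (by rw [sum_blockSizes, Nat.card_fin])
    rw [prod_blockSizes, Nat.card_fin] at h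
    exact_mod_cast h
  have hpos (i : Fin c.1.length) : (c.1.blocksFun i : ℚ) ≠ 0 := by
    have := c.1.one_le_blocksFun i
    positivity
  rw [eq_div_iff (by positivity), ← hcount, Finset.prod_div_distrib, Finset.prod_const_one,
    one_div_mul_eq_div, mul_div_cancel_right₀ _ (Finset.prod_ne_zero_iff.mpr fun i _ => hpos i)]

end Compositions

end StirlingFirst

theorem stmt_10_general (N p : ℕ) :
    (1 / (p.factorial : ℚ)) * ∑ c : {c : Composition N // c.length = p},
        ∏ i : Fin (c : Composition N).length, (1 : ℚ) / ((c : Composition N).blocksFun i : ℚ)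
      = (Nat.card {σ : Equiv.Perm (Fin N) // permOrbitCount σ = p} : ℚ) /
        (N.factorial : ℚ) := by
  rw [Finset.sum_congr rfl fun c _ => StirlingFirst.prod_one_div_blocksFun c, ← Finset.sum_div,
    ← Nat.cast_sum, StirlingFirst.sum_card_orbitLabellings (Nat.card_fin N)]
  push_cast
  field_simp

/-- `(1/p!) Σ_{compositions (n₁,…,n_p) of N} Π_l 1/n_l = c(N,p)/N!` where `c(N,p)` is the
number of permutations of an `N`-element set with exactly `p` orbits. -/
theorem stmt_10 (N p : ℕ) (hN : 1 ≤ N) (hp1 : 1 ≤ p) (hpN : p ≤ N) :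
    (1 / (p.factorial : ℚ)) * ∑ c : {c : Composition N // c.length = p},
        ∏ i : Fin (c : Composition N).length, (1 : ℚ) / ((c : Composition N).blocksFun i : ℚ)
      = (Nat.card {σ : Equiv.Perm (Fin N) // permOrbitCount σ = p} : ℚ) /
        (N.factorial : ℚ) :=
  stmt_10_general N p
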